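/- arXiv:2511.22682 — 3 statements merged into one kernel-verified Lean document; each statement's English description precedes it below -/
import Mathlib

section
/- The function P ↦ E[log₂(1 + K·I·P(I)/σ²)] is maximized over nonnegative power-allocation functions P subject to E[P(I)] = P_avg by the water-filling solution K·P(I)/σ² = max(1/I_th - 1/I, 0), where I_th > 0 is chosen so the constraint holds. Concretely: for a nonnegative random variable I and constants K, σ², P_avg > 0, if I_th satisfies E[max(1/I_th - 1/I, 0)] = K·P_avg/σ², then for every measurable P ≥ 0 with E[P(I)] ≤ P_avg one has E[log₂(1 + K·I·P(I)/σ²)] ≤ E[(log₂(I/I_th))⁺]. -/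
open MeasureTheory ProbabilityTheory Set

/-- Optimality of the water-filling power allocation for adaptive MQAM: if `I_th`
satisfies the average power constraint with equality, then any nonnegative power
allocation `P` with `E[P(I)] ≤ P_avg` achieves `E[log₂(1 + K·I·P(I)/σ²)] ≤ E[(log₂(I/I_th))⁺]`. -/
theorem waterfilling_optimal {Ω : Type*} [MeasureSpace Ω]
    [IsProbabilityMeasure (ℙ : Measure Ω)] (I : Ω → ℝ) (hI : Measurable I)
    (hIpos : ∀ ω, 0 < I ω) (K σ2 Pavg Ith : ℝ) (hK : 0 < K) (hK1 : K < 1)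
    (hσ : 0 < σ2) (hP : 0 < Pavg) (hIth : 0 < Ith)
    (hconstraint : ∫ ω, max (1 / Ith - 1 / I ω) 0 = K * Pavg / σ2)
    (P : ℝ → ℝ) (hPmeas : Measurable P) (hPnn : ∀ x, 0 ≤ P x)
    (hbudget : ∫ ω, P (I ω) ≤ Pavg)
    (hint1 : Integrable (fun ω => Real.logb 2 (1 + K * I ω * P (I ω) / σ2)))
    (hint2 : Integrable (fun ω => max (Real.logb 2 (I ω / Ith)) 0))
    (hint3 : Integrable (fun ω => P (I ω))) :
    ∫ ω, Real.logb 2 (1 + K * I ω * P (I ω) / σ2) ≤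
      ∫ ω, max (Real.logb 2 (I ω / Ith)) 0 := by
  have hL2 : (0:ℝ) < Real.log 2 := Real.log_pos (by norm_num)
  set c : ℝ := K * Ith / (σ2 * Real.log 2) with hc
  set d : ℝ := Ith / Real.log 2 with hd
  have hcpos : 0 < c := by positivity
  -- pointwise bound
  have key : ∀ ω, Real.logb 2 (1 + K * I ω * P (I ω) / σ2) ≤
      max (Real.logb 2 (I ω / Ith)) 0 + c * P (I ω)
        - d * max (1 / Ith - 1 / I ω) 0 := by
    intro ω
    have hi : 0 < I ω := hIpos ω
    have hp : 0 ≤ P (I ω) := hPnn _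
    have hfpos : 0 < 1 + K * I ω * P (I ω) / σ2 := by positivity
    rcases le_or_gt Ith (I ω) with h | h
    · -- water-filling region
      have hm : max (1 / Ith - 1 / I ω) 0 = 1 / Ith - 1 / I ω := by
        have : 1 / I ω ≤ 1 / Ith := one_div_le_one_div_of_le hIth h
        exact max_eq_left (by linarith)
      have hratio : 1 ≤ I ω / Ith := (one_le_div hIth).2 h
      have hmax : max (Real.logb 2 (I ω / Ith)) 0 = Real.logb 2 (I ω / Ith) :=
        max_eq_left (Real.logb_nonneg (by norm_num) hratio)
      rw [hm, hmax]
      have hSpos : 0 < I ω / Ith := by positivity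
      have hq : 0 < (1 + K * I ω * P (I ω) / σ2) / (I ω / Ith) := by positivity
      have hlog1 : Real.log ((1 + K * I ω * P (I ω) / σ2) / (I ω / Ith)) ≤
          (1 + K * I ω * P (I ω) / σ2) / (I ω / Ith) - 1 :=
        Real.log_le_sub_one_of_pos hq
      rw [Real.log_div (ne_of_gt hfpos) (ne_of_gt hSpos)] at hlog1
      have hval : (1 + K * I ω * P (I ω) / σ2) / (I ω / Ith) - 1 =
          K * Ith / σ2 * P (I ω) - Ith * (1 / Ith - 1 / I ω) := by
        field_simp
        ring
      have hlog : Real.log (1 + K * I ω * P (I ω) / σ2) ≤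
          Real.log (I ω / Ith) + (K * Ith / σ2 * P (I ω) - Ith * (1 / Ith - 1 / I ω)) := by
        rw [hval] at hlog1; linarith
      have hRHS : Real.logb 2 (I ω / Ith) + c * P (I ω) - d * (1 / Ith - 1 / I ω) =
          (Real.log (I ω / Ith) + (K * Ith / σ2 * P (I ω) - Ith * (1 / Ith - 1 / I ω)))
            / Real.log 2 := by
        rw [Real.logb, hc, hd]
        field_simp
        ring
      rw [hRHS, Real.logb]
      exact (div_le_div_iff_of_pos_right hL2).2 hlog
    · -- below threshold
      have hm : max (1 / Ith - 1 / I ω) 0 = 0 := by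
        have : 1 / Ith ≤ 1 / I ω := one_div_le_one_div_of_le hi h.le
        exact max_eq_right (by linarith)
      rw [hm, mul_zero, sub_zero]
      have hmaxnn : 0 ≤ max (Real.logb 2 (I ω / Ith)) 0 := le_max_right _ _
      have hlog : Real.log (1 + K * I ω * P (I ω) / σ2) ≤ K * Ith * P (I ω) / σ2 := by
        have h1 := Real.log_le_sub_one_of_pos hfpos
        have h2 : K * I ω * P (I ω) / σ2 ≤ K * Ith * P (I ω) / σ2 := by
          gcongr
        linarith
      have hcP : c * P (I ω) = (K * Ith * P (I ω) / σ2) / Real.log 2 := by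
        rw [hc]; field_simp
      have : Real.logb 2 (1 + K * I ω * P (I ω) / σ2) ≤ c * P (I ω) := by
        rw [hcP, Real.logb]
        exact (div_le_div_iff_of_pos_right hL2).2 hlog
      linarith
  -- integrability of the water-level term
  have hm_meas : Measurable (fun ω => max (1 / Ith - 1 / I ω) 0) :=
    ((measurable_const.sub (hI.const_div 1)).max measurable_const)
  have hm_int : Integrable (fun ω => max (1 / Ith - 1 / I ω) 0) := by
    refine (integrable_const (1 / Ith)).mono' hm_meas.aestronglyMeasurable ?_
    filter_upwards with ω
    have hi := hIpos ω
    rw [Real.norm_eq_abs, abs_of_nonneg (le_max_right _ _)]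
    have h1 : 1 / Ith - 1 / I ω ≤ 1 / Ith := by
      have : 0 < 1 / I ω := by positivity
      linarith
    exact max_le h1 (by positivity)
  have hRHS_int : Integrable (fun ω => max (Real.logb 2 (I ω / Ith)) 0 + c * P (I ω)
      - d * max (1 / Ith - 1 / I ω) 0) :=
    (hint2.add (hint3.const_mul c)).sub (hm_int.const_mul d)
  calc ∫ ω, Real.logb 2 (1 + K * I ω * P (I ω) / σ2)
      ≤ ∫ ω, (max (Real.logb 2 (I ω / Ith)) 0 + c * P (I ω)
          - d * max (1 / Ith - 1 / I ω) 0) := integral_mono hint1 hRHS_int key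
    _ = (∫ ω, max (Real.logb 2 (I ω / Ith)) 0) + c * (∫ ω, P (I ω))
          - d * (K * Pavg / σ2) := by
        have hA : Integrable (fun ω => max (Real.logb 2 (I ω / Ith)) 0 + c * P (I ω)) :=
          hint2.add (hint3.const_mul c)
        have hB : Integrable (fun ω => d * max (1 / Ith - 1 / I ω) 0) :=
          hm_int.const_mul d
        have hC : Integrable (fun ω => c * P (I ω)) := hint3.const_mul c
        rw [integral_sub hA hB, integral_add hint2 hC, integral_const_mul,
          integral_const_mul, hconstraint]
    _ ≤ ∫ ω, max (Real.logb 2 (I ω / Ith)) 0 := by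
        have h1 : c * (∫ ω, P (I ω)) ≤ c * Pavg :=
          mul_le_mul_of_nonneg_left hbudget hcpos.le
        have h2 : c * Pavg = d * (K * Pavg / σ2) := by
          rw [hc, hd]; field_simp
        linarith
end

section
/- For α, β > 0 with α - β not an integer, the gamma-gamma density admits the power-series expansion f(t) = Σ_{k=0}^∞ [a_k(α,β) t^{k+β-1} + a_k(β,α) t^{k+α-1}] for t > 0, where a_k(x, x̄) = π·csc(π(x-x̄))·(x x̄)^{k+x̄} / (Γ(x)Γ(x̄)Γ(k-x+x̄+1) k!). -/
open Real

/-- Modified Bessel function of the first kind, of real order `l`. -/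
noncomputable def besselI (l x : ℝ) : ℝ :=
  ∑' k : ℕ, (x / 2) ^ (2 * (k : ℝ) + l) / (Real.Gamma ((k : ℝ) + l + 1) * (k.factorial : ℝ))

/-- Modified Bessel function of the second kind, of (non-integer) real order `l`. -/
noncomputable def besselK (l x : ℝ) : ℝ :=
  (Real.pi / 2) * (besselI (-l) x - besselI l x) / Real.sin (Real.pi * l)

/-- Power-series coefficient
`a_k(x, x̄) = π csc(π(x - x̄)) (x x̄)^{k + x̄} / (Γ(x)Γ(x̄)Γ(k - x + x̄ + 1) k!)`. -/
noncomputable def ggCoeff (k : ℕ) (x xbar : ℝ) : ℝ :=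
  Real.pi * (1 / Real.sin (Real.pi * (x - xbar))) * (x * xbar) ^ ((k : ℝ) + xbar) /
    (Real.Gamma x * Real.Gamma xbar * Real.Gamma ((k : ℝ) - x + xbar + 1) * (k.factorial : ℝ))

lemma summable_aux (A ν : ℝ) (hA : 0 < A) :
    Summable (fun k : ℕ => A ^ k / (Real.Gamma ((k:ℝ) + ν + 1) * (k.factorial : ℝ))) := by
  apply summable_of_ratio_norm_eventually_le (r := 1/2) (by norm_num)
  filter_upwards [Filter.eventually_ge_atTop ⌈max (2*A) (-ν)⌉₊] with k hk
  have hk' : max (2*A) (-ν) ≤ (k:ℝ) := le_trans (Nat.le_ceil _) (by exact_mod_cast hk)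
  have h1 : (0:ℝ) < (k:ℝ) + ν + 1 := by
    have := le_trans (le_max_right _ _) hk'
    linarith
  have h2 : (2*A) ≤ (k:ℝ) := le_trans (le_max_left _ _) hk'
  have heq : A ^ (k+1) / (Real.Gamma ((↑(k+1):ℝ) + ν + 1) * ((k+1).factorial : ℝ))
      = (A / (((k:ℝ)+ν+1) * ((k:ℝ)+1))) * (A ^ k / (Real.Gamma ((k:ℝ) + ν + 1) * (k.factorial : ℝ))) := by
    have : ((↑(k+1):ℝ) + ν + 1) = ((k:ℝ) + ν + 1) + 1 := by push_cast; ring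
    rw [this, Real.Gamma_add_one h1.ne', pow_succ, Nat.factorial_succ]
    push_cast
    field_simp
  rw [heq, norm_mul]
  have hb : ‖A / (((k:ℝ)+ν+1) * ((k:ℝ)+1))‖ ≤ 1/2 := by
    rw [Real.norm_eq_abs, abs_div, abs_of_pos hA, abs_of_pos (by positivity)]
    rw [div_le_iff₀ (by positivity)]
    have hk1 : (1:ℝ) ≤ (k:ℝ)+ν+1 := by nlinarith [le_trans (le_max_right _ _) hk']
    nlinarith
  exact mul_le_mul_of_nonneg_right hb (norm_nonneg _)

/-- Power-series expansion of the gamma-gamma density for `α - β ∉ ℤ` and `t > 0`. -/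
theorem gamma_gamma_density_series (α β t : ℝ) (hα : 0 < α) (hβ : 0 < β)
    (hne : ∀ m : ℤ, α - β ≠ (m : ℝ)) (ht : 0 < t) :
    2 * (α * β) ^ ((α + β) / 2) / (Real.Gamma α * Real.Gamma β) *
        (t ^ ((α + β) / 2 - 1) * besselK (α - β) (2 * Real.sqrt (α * β * t))) =
      ∑' k : ℕ, (ggCoeff k α β * t ^ ((k : ℝ) + β - 1) +
        ggCoeff k β α * t ^ ((k : ℝ) + α - 1)) := by
  have hu : (0:ℝ) < α * β * t := by positivity
  have hab : (0:ℝ) < α * β := by positivity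
  have hsin : Real.sin (Real.pi * (α - β)) ≠ 0 := by
    intro h
    obtain ⟨n, hn⟩ := Real.sin_eq_zero_iff.mp h
    apply hne n
    have h2 : Real.pi * (α - β) = Real.pi * (n:ℝ) := by linear_combination -hn
    exact (mul_left_cancel₀ Real.pi_ne_zero h2)
  -- pointwise identities
  have hpt1 : ∀ k : ℕ, ggCoeff k α β * t ^ ((k : ℝ) + β - 1) =
      (Real.pi * (1 / Real.sin (Real.pi * (α - β))) * (α*β) ^ β * t ^ (β-1) /
        (Real.Gamma α * Real.Gamma β)) *
      ((α*β*t) ^ k / (Real.Gamma ((k:ℝ) + (β-α) + 1) * (k.factorial : ℝ))) := by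
    intro k
    rw [ggCoeff]
    have e1 : (α*β) ^ ((k:ℝ) + β) = (α*β) ^ β * (α*β) ^ (k:ℕ) := by
      rw [← Real.rpow_natCast (α*β) k, ← Real.rpow_add hab]; ring_nf
    have e2 : t ^ ((k:ℝ) + β - 1) = t ^ (β-1) * t ^ (k:ℕ) := by
      rw [← Real.rpow_natCast t k, ← Real.rpow_add ht]; ring_nf
    have e3 : ((k:ℝ) - α + β + 1) = ((k:ℝ) + (β-α) + 1) := by ring
    rw [e1, e2, e3, mul_pow]
    ring
  have hpt2 : ∀ k : ℕ, ggCoeff k β α * t ^ ((k : ℝ) + α - 1) =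
      (-(Real.pi * (1 / Real.sin (Real.pi * (α - β))) * (α*β) ^ α * t ^ (α-1) /
        (Real.Gamma α * Real.Gamma β))) *
      ((α*β*t) ^ k / (Real.Gamma ((k:ℝ) + (α-β) + 1) * (k.factorial : ℝ))) := by
    intro k
    rw [ggCoeff]
    have e1 : (β*α) ^ ((k:ℝ) + α) = (α*β) ^ α * (α*β) ^ (k:ℕ) := by
      rw [mul_comm β α, ← Real.rpow_natCast (α*β) k, ← Real.rpow_add hab]; ring_nf
    have e2 : t ^ ((k:ℝ) + α - 1) = t ^ (α-1) * t ^ (k:ℕ) := by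
      rw [← Real.rpow_natCast t k, ← Real.rpow_add ht]; ring_nf
    have e3 : ((k:ℝ) - β + α + 1) = ((k:ℝ) + (α-β) + 1) := by ring
    have e4 : Real.sin (Real.pi * (β - α)) = - Real.sin (Real.pi * (α - β)) := by
      rw [show Real.pi * (β - α) = -(Real.pi * (α-β)) by ring, Real.sin_neg]
    rw [e1, e2, e3, e4, mul_pow]
    ring
  -- bessel expansions
  have hsqrt : Real.sqrt (α*β*t) = (α*β*t) ^ ((1:ℝ)/2) := by
    rw [Real.sqrt_eq_rpow]
  have hI : ∀ l : ℝ, besselI l (2 * Real.sqrt (α*β*t))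
      = (α*β*t) ^ (l/2) * ∑' k : ℕ, (α*β*t) ^ k / (Real.Gamma ((k:ℝ) + l + 1) * (k.factorial : ℝ)) := by
    intro l
    rw [besselI, ← tsum_mul_left]
    congr 1; funext k
    have h2 : (2 * Real.sqrt (α*β*t)) / 2 = (α*β*t) ^ ((1:ℝ)/2) := by
      rw [hsqrt]; ring
    rw [h2, ← Real.rpow_natCast (α*β*t) k, ← Real.rpow_mul hu.le,
      show (1:ℝ)/2 * (2*(k:ℝ)+l) = ((k:ℝ) + l/2) by ring, Real.rpow_add hu]
    ring
  -- summability of the two series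
  have hG1 : Summable (fun k : ℕ => ggCoeff k α β * t ^ ((k:ℝ) + β - 1)) :=
    (((summable_aux (α*β*t) (β-α) hu).mul_left _).congr fun k => (hpt1 k).symm)
  have hG2 : Summable (fun k : ℕ => ggCoeff k β α * t ^ ((k:ℝ) + α - 1)) :=
    (((summable_aux (α*β*t) (α-β) hu).mul_left _).congr fun k => (hpt2 k).symm)
  rw [Summable.tsum_add hG1 hG2, tsum_congr hpt1, tsum_congr hpt2, tsum_mul_left, tsum_mul_left,
    besselK, show -(α-β) = β-α by ring, hI (β-α), hI (α-β),
    Real.mul_rpow hab.le ht.le, Real.mul_rpow hab.le ht.le]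
  have m1 : (α*β) ^ ((α+β)/2) * (α*β) ^ ((β-α)/2) * (t ^ ((α+β)/2-1) * t ^ ((β-α)/2))
      = (α*β) ^ β * t ^ (β-1) := by
    rw [← Real.rpow_add hab, ← Real.rpow_add ht]; ring_nf
  have m2 : (α*β) ^ ((α+β)/2) * (α*β) ^ ((α-β)/2) * (t ^ ((α+β)/2-1) * t ^ ((α-β)/2))
      = (α*β) ^ α * t ^ (α-1) := by
    rw [← Real.rpow_add hab, ← Real.rpow_add ht]; ring_nf
  set S1 := ∑' k : ℕ, (α*β*t) ^ k / (Real.Gamma ((k:ℝ) + (β-α) + 1) * (k.factorial : ℝ)) with hS1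
  set S2 := ∑' k : ℕ, (α*β*t) ^ k / (Real.Gamma ((k:ℝ) + (α-β) + 1) * (k.factorial : ℝ)) with hS2
  set s := Real.sin (Real.pi * (α - β)) with hs
  linear_combination (Real.pi * S1 / (s * (Real.Gamma α * Real.Gamma β))) * m1 -
    (Real.pi * S2 / (s * (Real.Gamma α * Real.Gamma β))) * m2
end

section
/- For the composite channel I = I_a·I_p (gamma-gamma times pointing error, independent), the n-th moment is E[I^n] = [Γ(α+n)Γ(β+n)/((αβ)^n Γ(α)Γ(β))] · [A₀^n ξ²/(n+ξ²)] for n ∈ (-min(α,β,ξ²), ∞), and differentiating this moment formula at n = 0 yields E[ln I] = ln(A₀/(αβ)) + ψ(α) + ψ(β) - 1/ξ². -/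
open MeasureTheory ProbabilityTheory Set Filter Topology
open scoped ENNReal NNReal

/-- The digamma function `ψ = Γ'/Γ = (log ∘ Γ)'`. -/
noncomputable def digamma (x : ℝ) : ℝ := deriv (fun y => Real.log (Real.Gamma y)) x

/-- Moment function of the composite gamma-gamma/pointing-error channel. -/
noncomputable def compositeMoment (α β ξ A₀ n : ℝ) : ℝ :=
  Real.Gamma (α + n) * Real.Gamma (β + n) / ((α * β) ^ n * (Real.Gamma α * Real.Gamma β)) *
    (A₀ ^ n * ξ ^ 2 / (n + ξ ^ 2))


section AuxProofs

lemma gammaDeriv_aux {a : ℝ} (ha : 0 < a) :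
    IntegrableOn (fun t : ℝ => t ^ (a - 1) * (Real.log t * Real.exp (-t))) (Ioi 0) volume ∧
      HasDerivAt Real.Gamma (∫ t : ℝ in Ioi 0, t ^ (a - 1) * (Real.log t * Real.exp (-t))) a := by
  have ha' : 0 < (a : ℂ).re := by simpa using ha
  -- complex derivative of GammaIntegral
  have h1 := Complex.hasDerivAt_GammaIntegral ha'
  -- the complex integrand is the coercion of the real one on Ioi 0
  have key : ∀ t : ℝ, t ∈ Ioi (0:ℝ) →
      (t : ℂ) ^ ((a : ℂ) - 1) * (Real.log t * Real.exp (-t)) =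
        ((t ^ (a - 1) * (Real.log t * Real.exp (-t)) : ℝ) : ℂ) := by
    intro t ht
    rw [show ((a:ℂ) - 1) = ((a - 1 : ℝ) : ℂ) by push_cast; ring,
      ← Complex.ofReal_cpow (le_of_lt ht)]
    push_cast
    ring
  have hint : ∫ t : ℝ in Ioi 0, (t : ℂ) ^ ((a:ℂ) - 1) * (Real.log t * Real.exp (-t)) =
      ((∫ t : ℝ in Ioi 0, t ^ (a - 1) * (Real.log t * Real.exp (-t)) : ℝ) : ℂ) := by
    exact (setIntegral_congr_fun measurableSet_Ioi key).trans integral_ofReal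
  constructor
  · -- integrability from the mellin machinery
    have hconv : MellinConvergent (fun t => Real.log t • ((Real.exp (-t) : ℝ) : ℂ)) (a : ℂ) := by
      refine (mellin_hasDerivAt_of_isBigO_rpow (a := a + 1) (b := 0) ?_ ?_ ?_ ?_ ?_).1
      · refine (Continuous.continuousOn ?_).locallyIntegrableOn measurableSet_Ioi
        exact Complex.continuous_ofReal.comp (Real.continuous_exp.comp continuous_neg)
      · rw [← Asymptotics.isBigO_norm_left]
        simp_rw [Complex.norm_real,
          Asymptotics.isBigO_norm_left]
        simpa only [neg_one_mul] using
          (isLittleO_exp_neg_mul_rpow_atTop zero_lt_one _).isBigO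
      · simpa using lt_add_one a
      · simp_rw [neg_zero, Real.rpow_zero]
        refine Asymptotics.isBigO_const_of_tendsto (?_ : Tendsto _ _ (𝓝 (1 : ℂ))) one_ne_zero
        rw [(by simp : (1 : ℂ) = ((Real.exp (-0) : ℝ) : ℂ))]
        exact (Complex.continuous_ofReal.comp
          (Real.continuous_exp.comp continuous_neg)).continuousWithinAt
      · simpa using ha
    have : IntegrableOn
        (fun t : ℝ => (t : ℂ) ^ ((a:ℂ) - 1) • (Real.log t • ((Real.exp (-t) : ℝ) : ℂ)))
        (Ioi 0) volume := hconv
    have h2 : IntegrableOn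
        (fun t : ℝ => ((t ^ (a - 1) * (Real.log t * Real.exp (-t)) : ℝ) : ℂ)) (Ioi 0) volume := by
      refine this.congr_fun (fun t ht => ?_) measurableSet_Ioi
      simp only [smul_eq_mul, Complex.real_smul]
      rw [← key t ht]
    have h3 := h2.re
    refine IntegrableOn.congr_fun h3 (fun t _ => ?_) measurableSet_Ioi
    exact RCLike.ofReal_re _
  · -- Gamma agrees with GammaIntegral near a
    have h2 : HasDerivAt Complex.Gamma
        (∫ t : ℝ in Ioi 0, (t : ℂ) ^ ((a:ℂ) - 1) * (Real.log t * Real.exp (-t))) (a : ℂ) := by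
      refine h1.congr_of_eventuallyEq ?_
      have hopen : IsOpen {s : ℂ | 0 < s.re} := isOpen_lt continuous_const Complex.continuous_re
      filter_upwards [hopen.mem_nhds ha'] with s hs
      exact Complex.Gamma_eq_integral hs
    rw [hint] at h2
    have h3 := h2.real_of_complex
    simp only [Complex.ofReal_re] at h3
    exact h3


section Helpers

/-- integral against a `withDensity` of an `ofReal` density. -/
lemma integral_withDensity_ofReal {g : ℝ → ℝ} (hg : Measurable g) (hg0 : ∀ x, 0 ≤ g x)
    (f : ℝ → ℝ) :
    ∫ x, f x ∂(volume.withDensity fun x => ENNReal.ofReal (g x)) = ∫ x, g x * f x := by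
  rw [show (fun x => ENNReal.ofReal (g x)) = (fun x => ((g x).toNNReal : ℝ≥0∞)) from rfl,
    integral_withDensity_eq_integral_smul hg.real_toNNReal]
  congr 1
  ext x
  simp [NNReal.smul_def, Real.coe_toNNReal _ (hg0 x)]

lemma integrable_withDensity_ofReal {g : ℝ → ℝ} (hg : Measurable g) (hg0 : ∀ x, 0 ≤ g x)
    (f : ℝ → ℝ) :
    Integrable f (volume.withDensity fun x => ENNReal.ofReal (g x)) ↔
      Integrable (fun x => g x * f x) volume := by
  rw [show (fun x => ENNReal.ofReal (g x)) = (fun x => ((g x).toNNReal : ℝ≥0∞)) from rfl,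
    integrable_withDensity_iff_integrable_smul hg.real_toNNReal]
  refine integrable_congr (Eventually.of_forall fun x => ?_)
  simp [NNReal.smul_def, Real.coe_toNNReal _ (hg0 x)]

/-- integrability of the gamma-type integrand with general rate. -/
lemma integrableOn_rpow_exp {s r : ℝ} (hs : 0 < s) (hr : 0 < r) :
    IntegrableOn (fun x : ℝ => x ^ (s - 1) * Real.exp (-(r * x))) (Ioi 0) volume := by
  have h0 := Real.GammaIntegral_convergent hs
  have h1 : IntegrableOn (fun x : ℝ => Real.exp (-(r * x)) * (r * x) ^ (s - 1)) (Ioi 0) volume := by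
    have := (integrableOn_Ioi_comp_mul_left_iff
      (fun x : ℝ => Real.exp (-x) * x ^ (s - 1)) 0 hr).mpr
    rw [mul_zero] at this
    exact this h0
  have h2 : IntegrableOn (fun x : ℝ => r ^ (s-1) * (x ^ (s - 1) * Real.exp (-(r * x))))
      (Ioi 0) volume := by
    refine h1.congr_fun (fun x hx => ?_) measurableSet_Ioi
    dsimp only
    rw [Real.mul_rpow hr.le (le_of_lt hx)]
    ring
  have h3 := h2.const_mul (r ^ (s-1))⁻¹
  refine IntegrableOn.congr_fun h3 (fun x hx => ?_) measurableSet_Ioi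
  field_simp

/-- value of the gamma-type integral with general rate (restatement). -/
lemma integral_rpow_exp {s r : ℝ} (hs : 0 < s) (hr : 0 < r) :
    ∫ x : ℝ in Ioi 0, x ^ (s - 1) * Real.exp (-(r * x)) = Real.Gamma s / r ^ s := by
  rw [Real.integral_rpow_mul_exp_neg_mul_Ioi hs hr, one_div, Real.inv_rpow hr.le]
  rw [inv_mul_eq_div, div_eq_div_iff (by positivity) (by positivity)]

end Helpers

section GammaLemmas

/-- a.e. positivity under the gamma measure -/
lemma gamma_ae_pos {a r : ℝ} : ∀ᵐ x ∂(gammaMeasure a r), 0 < x := by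
  rw [gammaMeasure, show gammaPDF a r = fun x => ENNReal.ofReal (gammaPDFReal a r x) from rfl, ae_withDensity_iff (measurable_gammaPDFReal a r).ennreal_ofReal]
  have h0 : ∀ᵐ x : ℝ ∂volume, x ≠ 0 := by
    rw [ae_iff]
    simp only [ne_eq, not_not, setOf_eq_eq_singleton]
    exact measure_singleton 0
  filter_upwards [h0] with x hx hpdf
  rcases lt_trichotomy x 0 with h | h | h
  · exact absurd (by rw [gammaPDF_of_neg h] : gammaPDF a r x = 0) hpdf
  · exact absurd h hx
  · exact h

lemma gamma_rpow_integrable {a r n : ℝ} (ha : 0 < a) (hr : 0 < r) (hn : -a < n) :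
    Integrable (fun x => x ^ n) (gammaMeasure a r) := by
  rw [gammaMeasure, show gammaPDF a r = fun x => ENNReal.ofReal (gammaPDFReal a r x) from rfl, integrable_withDensity_ofReal (measurable_gammaPDFReal a r)
    (gammaPDFReal_nonneg ha hr)]
  have key : (fun x : ℝ => gammaPDFReal a r x * x ^ n) =ᵐ[volume]
      (Ioi (0:ℝ)).indicator (fun x => r ^ a / Real.Gamma a *
        (x ^ (a + n - 1) * Real.exp (-(r * x)))) := by
    have h0 : ∀ᵐ x : ℝ ∂volume, x ≠ 0 := by
      rw [ae_iff]; simp only [ne_eq, not_not, setOf_eq_eq_singleton]; exact measure_singleton 0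
    filter_upwards [h0] with x hx
    rcases lt_trichotomy x 0 with h | h | h
    · rw [indicator_of_notMem (by simpa using h.not_gt), gammaPDFReal, if_neg (not_le.mpr h),
        zero_mul]
    · exact absurd h hx
    · rw [indicator_of_mem (mem_Ioi.mpr h), gammaPDFReal, if_pos h.le]
      rw [show a + n - 1 = (a - 1) + n by ring, Real.rpow_add h]
      ring
  rw [integrable_congr key]
  rw [integrable_indicator_iff measurableSet_Ioi]
  exact (integrableOn_rpow_exp (by linarith : (0:ℝ) < a + n) hr).const_mul _

lemma gamma_rpow_integral {a r n : ℝ} (ha : 0 < a) (hr : 0 < r) (hn : -a < n) :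
    ∫ x, x ^ n ∂(gammaMeasure a r) = Real.Gamma (a + n) / (r ^ n * Real.Gamma a) := by
  rw [gammaMeasure, show gammaPDF a r = fun x => ENNReal.ofReal (gammaPDFReal a r x) from rfl, integral_withDensity_ofReal (measurable_gammaPDFReal a r)
    (gammaPDFReal_nonneg ha hr)]
  have key : (fun x : ℝ => gammaPDFReal a r x * x ^ n) =ᵐ[volume]
      (Ioi (0:ℝ)).indicator (fun x => r ^ a / Real.Gamma a *
        (x ^ (a + n - 1) * Real.exp (-(r * x)))) := by
    have h0 : ∀ᵐ x : ℝ ∂volume, x ≠ 0 := by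
      rw [ae_iff]; simp only [ne_eq, not_not, setOf_eq_eq_singleton]; exact measure_singleton 0
    filter_upwards [h0] with x hx
    rcases lt_trichotomy x 0 with h | h | h
    · rw [indicator_of_notMem (by simpa using h.not_gt), gammaPDFReal, if_neg (not_le.mpr h),
        zero_mul]
    · exact absurd h hx
    · rw [indicator_of_mem (mem_Ioi.mpr h), gammaPDFReal, if_pos h.le]
      rw [show a + n - 1 = (a - 1) + n by ring, Real.rpow_add h]
      ring
  rw [integral_congr_ae key, integral_indicator measurableSet_Ioi, integral_const_mul,
    show a + n - 1 = (a + n) - 1 by ring,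
    integral_rpow_exp (by linarith : (0:ℝ) < a + n) hr]
  rw [Real.rpow_add hr, div_mul_div_comm]
  rw [div_eq_div_iff (by positivity) (by positivity)]
  ring

end GammaLemmas

section LogLemmas


lemma integrableOn_rpow_log_exp {s r : ℝ} (hs : 0 < s) (hr : 0 < r) :
    IntegrableOn (fun x : ℝ => x ^ (s - 1) * Real.log x * Real.exp (-(r * x))) (Ioi 0) volume := by
  have hg := (gammaDeriv_aux hs).1
  have hgs : IntegrableOn
      (fun x : ℝ => (r * x) ^ (s - 1) * (Real.log (r * x) * Real.exp (-(r * x))))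
      (Ioi 0) volume := by
    have := (integrableOn_Ioi_comp_mul_left_iff
      (fun t : ℝ => t ^ (s - 1) * (Real.log t * Real.exp (-t))) 0 hr).mpr
    rw [mul_zero] at this
    exact this hg
  refine IntegrableOn.congr_fun
    ((hgs.const_mul (r ^ (s-1))⁻¹).sub ((integrableOn_rpow_exp hs hr).const_mul (Real.log r)))
    (fun x hx => ?_) measurableSet_Ioi
  have hx0 : (0:ℝ) < x := hx
  simp only [Pi.sub_apply]
  rw [Real.mul_rpow hr.le hx0.le, Real.log_mul hr.ne' hx0.ne']
  have : (r:ℝ) ^ (s-1) ≠ 0 := by positivity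
  field_simp
  ring

lemma integral_rpow_log_exp {s r : ℝ} (hs : 0 < s) (hr : 0 < r) :
    ∫ x : ℝ in Ioi 0, x ^ (s - 1) * Real.log x * Real.exp (-(r * x)) =
      (deriv Real.Gamma s - Real.log r * Real.Gamma s) / r ^ s := by
  have hg := (gammaDeriv_aux hs).1
  have hG : deriv Real.Gamma s = ∫ t : ℝ in Ioi 0, t ^ (s - 1) * (Real.log t * Real.exp (-t)) :=
    (gammaDeriv_aux hs).2.deriv
  have hgs : IntegrableOn
      (fun x : ℝ => (r * x) ^ (s - 1) * (Real.log (r * x) * Real.exp (-(r * x))))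
      (Ioi 0) volume := by
    have := (integrableOn_Ioi_comp_mul_left_iff
      (fun t : ℝ => t ^ (s - 1) * (Real.log t * Real.exp (-t))) 0 hr).mpr
    rw [mul_zero] at this
    exact this hg
  have step1 : ∫ x : ℝ in Ioi 0, x ^ (s - 1) * Real.log x * Real.exp (-(r * x)) =
      ∫ x : ℝ in Ioi 0,
        ((r ^ (s-1))⁻¹ * ((r * x) ^ (s - 1) * (Real.log (r * x) * Real.exp (-(r * x)))) -
          Real.log r * (x ^ (s - 1) * Real.exp (-(r * x)))) := by
    refine setIntegral_congr_fun measurableSet_Ioi (fun x hx => ?_)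
    have hx0 : (0:ℝ) < x := hx
    rw [Real.mul_rpow hr.le hx0.le, Real.log_mul hr.ne' hx0.ne']
    have : (r:ℝ) ^ (s-1) ≠ 0 := by positivity
    field_simp
    ring
  rw [step1, integral_sub (hgs.const_mul _) ((integrableOn_rpow_exp hs hr).const_mul _),
    integral_const_mul, integral_const_mul]
  have sub1 : ∫ x : ℝ in Ioi 0, (r * x) ^ (s - 1) * (Real.log (r * x) * Real.exp (-(r * x))) =
      r⁻¹ * ∫ t : ℝ in Ioi 0, t ^ (s - 1) * (Real.log t * Real.exp (-t)) := by
    have := integral_comp_mul_left_Ioi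
      (fun t : ℝ => t ^ (s - 1) * (Real.log t * Real.exp (-t))) 0 hr
    rw [mul_zero] at this
    simpa [smul_eq_mul] using this
  rw [sub1, integral_rpow_exp hs hr, ← hG]
  have h1 : (r:ℝ) ^ (s-1) = r ^ s / r := by
    rw [Real.rpow_sub hr, Real.rpow_one]
  rw [h1]
  have h2 : (r:ℝ) ^ s ≠ 0 := by positivity
  field_simp

lemma gamma_log_integrable {a r : ℝ} (ha : 0 < a) (hr : 0 < r) :
    Integrable Real.log (gammaMeasure a r) := by
  rw [gammaMeasure, show gammaPDF a r = fun x => ENNReal.ofReal (gammaPDFReal a r x) from rfl,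
    integrable_withDensity_ofReal (measurable_gammaPDFReal a r) (gammaPDFReal_nonneg ha hr)]
  have key : (fun x : ℝ => gammaPDFReal a r x * Real.log x) =ᵐ[volume]
      (Ioi (0:ℝ)).indicator (fun x => r ^ a / Real.Gamma a *
        (x ^ (a - 1) * Real.log x * Real.exp (-(r * x)))) := by
    have h0 : ∀ᵐ x : ℝ ∂volume, x ≠ 0 := by
      rw [ae_iff]; simp only [ne_eq, not_not, setOf_eq_eq_singleton]; exact measure_singleton 0
    filter_upwards [h0] with x hx
    rcases lt_trichotomy x 0 with h | h | h
    · rw [indicator_of_notMem (by simpa using h.not_gt), gammaPDFReal, if_neg (not_le.mpr h),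
        zero_mul]
    · exact absurd h hx
    · rw [indicator_of_mem (mem_Ioi.mpr h), gammaPDFReal, if_pos h.le]
      ring
  rw [integrable_congr key, integrable_indicator_iff measurableSet_Ioi]
  exact (integrableOn_rpow_log_exp ha hr).const_mul _

lemma gamma_log_integral {a r : ℝ} (ha : 0 < a) (hr : 0 < r) :
    ∫ x, Real.log x ∂(gammaMeasure a r) =
      deriv Real.Gamma a / Real.Gamma a - Real.log r := by
  rw [gammaMeasure, show gammaPDF a r = fun x => ENNReal.ofReal (gammaPDFReal a r x) from rfl,
    integral_withDensity_ofReal (measurable_gammaPDFReal a r) (gammaPDFReal_nonneg ha hr)]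
  have key : (fun x : ℝ => gammaPDFReal a r x * Real.log x) =ᵐ[volume]
      (Ioi (0:ℝ)).indicator (fun x => r ^ a / Real.Gamma a *
        (x ^ (a - 1) * Real.log x * Real.exp (-(r * x)))) := by
    have h0 : ∀ᵐ x : ℝ ∂volume, x ≠ 0 := by
      rw [ae_iff]; simp only [ne_eq, not_not, setOf_eq_eq_singleton]; exact measure_singleton 0
    filter_upwards [h0] with x hx
    rcases lt_trichotomy x 0 with h | h | h
    · rw [indicator_of_notMem (by simpa using h.not_gt), gammaPDFReal, if_neg (not_le.mpr h),
        zero_mul]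
    · exact absurd h hx
    · rw [indicator_of_mem (mem_Ioi.mpr h), gammaPDFReal, if_pos h.le]
      ring
  rw [integral_congr_ae key, integral_indicator measurableSet_Ioi, integral_const_mul,
    integral_rpow_log_exp ha hr]
  have h2 : (r:ℝ) ^ a ≠ 0 := by positivity
  have h3 : Real.Gamma a ≠ 0 := (Real.Gamma_pos_of_pos ha).ne'
  field_simp

end LogLemmas

section PointingError

variable {s A₀ : ℝ}

lemma pe_density_measurable (s A₀ : ℝ) :
    Measurable fun t : ℝ => (Ioc (0:ℝ) A₀).indicator (fun t => s / A₀ ^ s * t ^ (s - 1)) t := by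
  apply Measurable.indicator _ measurableSet_Ioc
  measurability

lemma pe_density_nonneg (hs : 0 < s) (hA : 0 < A₀) (t : ℝ) :
    0 ≤ (Ioc (0:ℝ) A₀).indicator (fun t => s / A₀ ^ s * t ^ (s - 1)) t := by
  by_cases ht : t ∈ Ioc (0:ℝ) A₀
  · rw [indicator_of_mem ht]
    have := ht.1
    positivity
  · rw [indicator_of_notMem ht]

lemma pe_ae_pos (hs : 0 < s) (hA : 0 < A₀) :
    ∀ᵐ t ∂(volume.withDensity fun t =>
      ENNReal.ofReal ((Ioc (0:ℝ) A₀).indicator (fun t => s / A₀ ^ s * t ^ (s - 1)) t)), 0 < t := by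
  rw [ae_withDensity_iff (pe_density_measurable s A₀).ennreal_ofReal]
  refine ae_of_all _ fun t ht => ?_
  by_contra h0
  have : t ∉ Ioc (0:ℝ) A₀ := fun hmem => h0 hmem.1
  rw [indicator_of_notMem this, ENNReal.ofReal_zero] at ht
  exact ht rfl

lemma pe_mul_indicator (f : ℝ → ℝ) (t : ℝ) :
    (Ioc (0:ℝ) A₀).indicator (fun t => s / A₀ ^ s * t ^ (s - 1)) t * f t =
      (Ioc (0:ℝ) A₀).indicator (fun t => s / A₀ ^ s * t ^ (s - 1) * f t) t := by
  by_cases ht : t ∈ Ioc (0:ℝ) A₀ <;> simp [indicator_of_mem, indicator_of_notMem, ht]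

lemma pe_rpow_integrable (hs : 0 < s) (hA : 0 < A₀) {n : ℝ} (hn : -s < n) :
    Integrable (fun t => t ^ n) (volume.withDensity fun t =>
      ENNReal.ofReal ((Ioc (0:ℝ) A₀).indicator (fun t => s / A₀ ^ s * t ^ (s - 1)) t)) := by
  rw [integrable_withDensity_ofReal (pe_density_measurable s A₀) (pe_density_nonneg hs hA)]
  simp only [pe_mul_indicator (fun t : ℝ => t ^ n)]
  rw [integrable_indicator_iff measurableSet_Ioc]
  refine IntegrableOn.congr_fun
    (((intervalIntegral.intervalIntegrable_rpow'
      (by linarith : (-1:ℝ) < n + s - 1)).1).const_mul (s / A₀ ^ s)) (fun t ht => ?_)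
    measurableSet_Ioc
  rw [show n + s - 1 = (s - 1) + n by ring, Real.rpow_add ht.1]
  ring

lemma pe_rpow_integral (hs : 0 < s) (hA : 0 < A₀) {n : ℝ} (hn : -s < n) :
    ∫ t, t ^ n ∂(volume.withDensity fun t =>
      ENNReal.ofReal ((Ioc (0:ℝ) A₀).indicator (fun t => s / A₀ ^ s * t ^ (s - 1)) t)) =
      A₀ ^ n * s / (n + s) := by
  rw [integral_withDensity_ofReal (pe_density_measurable s A₀) (pe_density_nonneg hs hA)]
  simp only [pe_mul_indicator (fun t : ℝ => t ^ n)]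
  rw [integral_indicator measurableSet_Ioc]
  have congr1 : ∫ t in Ioc (0:ℝ) A₀, s / A₀ ^ s * t ^ (s - 1) * t ^ n =
      ∫ t in Ioc (0:ℝ) A₀, s / A₀ ^ s * t ^ (n + s - 1) := by
    refine setIntegral_congr_fun measurableSet_Ioc (fun t ht => ?_)
    rw [show n + s - 1 = (s - 1) + n by ring, Real.rpow_add ht.1]
    ring
  rw [congr1, ← intervalIntegral.integral_of_le hA.le, intervalIntegral.integral_const_mul,
    integral_rpow (Or.inl (by linarith : (-1:ℝ) < n + s - 1)),
    show n + s - 1 + 1 = n + s by ring,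
    Real.zero_rpow (by linarith : n + s ≠ 0)]
  have h1 : A₀ ^ (n + s) = A₀ ^ n * A₀ ^ s := Real.rpow_add hA n s
  have h2 : (A₀:ℝ) ^ s ≠ 0 := by positivity
  have h3 : n + s ≠ 0 := by linarith
  field_simp [h1]
  rw [h1]; ring

lemma pe_log_intervalIntegrable (hs : 0 < s) (hA : 0 < A₀) :
    IntegrableOn (fun t : ℝ => t ^ (s - 1) * Real.log t) (Ioc (0:ℝ) A₀) volume := by
  have hdom : IntegrableOn
      (fun t : ℝ => Real.exp A₀ * ‖t ^ (s - 1) * (Real.log t * Real.exp (-t))‖)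
      (Ioc (0:ℝ) A₀) volume :=
    IntegrableOn.mono_set ((gammaDeriv_aux hs).1.norm.const_mul _) Ioc_subset_Ioi_self
  refine Integrable.mono' hdom ?_ ?_
  · apply Measurable.aestronglyMeasurable
    measurability
  · rw [ae_restrict_iff' measurableSet_Ioc]
    refine ae_of_all _ fun t ht => ?_
    have ht0 : 0 < t := ht.1
    have htA : t ≤ A₀ := ht.2
    have hnorm : ‖t ^ (s - 1) * (Real.log t * Real.exp (-t))‖ =
        ‖t ^ (s - 1) * Real.log t‖ * Real.exp (-t) := by
      rw [show t ^ (s - 1) * (Real.log t * Real.exp (-t)) =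
        (t ^ (s - 1) * Real.log t) * Real.exp (-t) by ring, norm_mul]
      congr 1
      exact abs_of_pos (Real.exp_pos _)
    rw [hnorm]
    have h1 : (1:ℝ) ≤ Real.exp A₀ * Real.exp (-t) := by
      rw [← Real.exp_add]
      exact Real.one_le_exp (by linarith)
    nlinarith [norm_nonneg (t ^ (s - 1) * Real.log t), Real.exp_pos A₀, Real.exp_pos (-t)]

lemma pe_log_integrable (hs : 0 < s) (hA : 0 < A₀) :
    Integrable Real.log (volume.withDensity fun t =>
      ENNReal.ofReal ((Ioc (0:ℝ) A₀).indicator (fun t => s / A₀ ^ s * t ^ (s - 1)) t)) := by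
  rw [integrable_withDensity_ofReal (pe_density_measurable s A₀) (pe_density_nonneg hs hA)]
  simp only [pe_mul_indicator Real.log]
  rw [integrable_indicator_iff measurableSet_Ioc]
  refine IntegrableOn.congr_fun ((pe_log_intervalIntegrable hs hA).const_mul (s / A₀ ^ s))
    (fun t ht => by ring) measurableSet_Ioc

lemma integral_rpow_log_Ioc (hs : 0 < s) (hA : 0 < A₀) :
    ∫ t in Ioc (0:ℝ) A₀, t ^ (s - 1) * Real.log t =
      A₀ ^ s * Real.log A₀ / s - A₀ ^ s / s ^ 2 := by
  set F : ℝ → ℝ := fun t => t ^ s * Real.log t / s - t ^ s / s ^ 2 with hF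
  have hderiv : ∀ x ∈ Ioo (0:ℝ) A₀, HasDerivAt F (x ^ (s - 1) * Real.log x) x := by
    intro x hx
    have hx0 : (0:ℝ) < x := hx.1
    have H1 : HasDerivAt (fun t : ℝ => t ^ s) (s * x ^ (s - 1)) x :=
      Real.hasDerivAt_rpow_const (Or.inl hx0.ne')
    have H2 : HasDerivAt Real.log x⁻¹ x := Real.hasDerivAt_log hx0.ne'
    have H := ((H1.mul H2).div_const s).sub (H1.div_const (s ^ 2))
    have hxs : x ^ s * x⁻¹ = x ^ (s - 1) := by
      rw [Real.rpow_sub hx0, Real.rpow_one, div_eq_mul_inv]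
    have heq : (s * x ^ (s - 1) * Real.log x + x ^ s * x⁻¹) / s - s * x ^ (s - 1) / s ^ 2 =
        x ^ (s - 1) * Real.log x := by
      rw [hxs]
      field_simp
      ring
    rw [← heq]
    exact H
  have hint : IntervalIntegrable (fun t : ℝ => t ^ (s - 1) * Real.log t) volume 0 A₀ := by
    rw [intervalIntegrable_iff_integrableOn_Ioc_of_le hA.le]
    exact pe_log_intervalIntegrable hs hA
  have hT0 : Tendsto F (𝓝[>] (0:ℝ)) (𝓝 0) := by
    have T1 : Tendsto (fun t : ℝ => t ^ s * Real.log t) (𝓝[>] (0:ℝ)) (𝓝 0) := by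
      have := tendsto_log_mul_rpow_nhdsGT_zero hs
      refine this.congr fun t => mul_comm _ _
    have T2 : Tendsto (fun t : ℝ => t ^ s) (𝓝[>] (0:ℝ)) (𝓝 0) := by
      have hc : ContinuousAt (fun t : ℝ => t ^ s) 0 :=
        Real.continuousAt_rpow_const 0 s (Or.inr hs.le)
      have h2 : Tendsto (fun t : ℝ => t ^ s) (𝓝[>] (0:ℝ)) (𝓝 ((0:ℝ) ^ s)) :=
        hc.tendsto.mono_left nhdsWithin_le_nhds
      rwa [Real.zero_rpow hs.ne'] at h2
    have := (T1.div_const s).sub (T2.div_const (s ^ 2))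
    simpa using this
  have hTA : Tendsto F (𝓝[<] A₀) (𝓝 (F A₀)) := by
    have hc : ContinuousAt F A₀ := by
      have h1 : ContinuousAt (fun t : ℝ => t ^ s) A₀ :=
        Real.continuousAt_rpow_const A₀ s (Or.inl hA.ne')
      exact ((h1.mul (Real.continuousAt_log hA.ne')).div_const s).sub (h1.div_const (s ^ 2))
    exact hc.tendsto.mono_left nhdsWithin_le_nhds
  have := intervalIntegral.integral_eq_sub_of_hasDerivAt_of_tendsto hA hderiv hint hT0 hTA
  rw [intervalIntegral.integral_of_le hA.le] at this
  rw [this, hF, sub_zero]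

lemma pe_log_integral (hs : 0 < s) (hA : 0 < A₀) :
    ∫ t, Real.log t ∂(volume.withDensity fun t =>
      ENNReal.ofReal ((Ioc (0:ℝ) A₀).indicator (fun t => s / A₀ ^ s * t ^ (s - 1)) t)) =
      Real.log A₀ - 1 / s := by
  rw [integral_withDensity_ofReal (pe_density_measurable s A₀) (pe_density_nonneg hs hA)]
  simp only [pe_mul_indicator Real.log]
  rw [integral_indicator measurableSet_Ioc]
  have congr1 : ∫ t in Ioc (0:ℝ) A₀, s / A₀ ^ s * t ^ (s - 1) * Real.log t =
      ∫ t in Ioc (0:ℝ) A₀, s / A₀ ^ s * (t ^ (s - 1) * Real.log t) := by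
    refine setIntegral_congr_fun measurableSet_Ioc (fun t ht => by ring)
  rw [congr1, integral_const_mul, integral_rpow_log_Ioc hs hA]
  have h2 : (A₀:ℝ) ^ s ≠ 0 := by positivity
  field_simp

end PointingError


lemma Gamma_ne_neg_nat {a : ℝ} (ha : 0 < a) : ∀ m : ℕ, a ≠ -(m:ℝ) := fun m =>
  ne_of_gt (lt_of_le_of_lt (neg_nonpos.mpr (Nat.cast_nonneg m)) ha)

lemma digamma_eq {a : ℝ} (ha : 0 < a) : digamma a = deriv Real.Gamma a / Real.Gamma a := by
  have h := ((Real.differentiableAt_Gamma (Gamma_ne_neg_nat ha)).hasDerivAt).log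
    (Real.Gamma_pos_of_pos ha).ne'
  simp only [digamma]
  exact h.deriv

lemma hasDerivAt_Gamma_shift {a : ℝ} (ha : 0 < a) :
    HasDerivAt (fun n : ℝ => Real.Gamma (a + n)) (deriv Real.Gamma a) 0 := by
  have hin : HasDerivAt (fun n : ℝ => a + n) 1 0 := by
    simpa using (hasDerivAt_id (0:ℝ)).const_add a
  have h2 : HasDerivAt Real.Gamma (deriv Real.Gamma (a + 0)) (a + 0) := by
    rw [add_zero]
    exact (Real.differentiableAt_Gamma (Gamma_ne_neg_nat ha)).hasDerivAt
  have h3 := h2.comp 0 hin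
  simp only [add_zero, mul_one] at h3
  exact h3

lemma compositeMoment_deriv {α β ξ A₀ : ℝ} (hα : 0 < α) (hβ : 0 < β) (hξ : 0 < ξ)
    (hA : 0 < A₀) :
    deriv (compositeMoment α β ξ A₀) 0 =
      Real.log (A₀ / (α * β)) + digamma α + digamma β - 1 / ξ ^ 2 := by
  have hΓα := hasDerivAt_Gamma_shift hα
  have hΓβ := hasDerivAt_Gamma_shift hβ
  have hαβ : (0:ℝ) < α * β := mul_pos hα hβ
  have hP : HasDerivAt (fun n : ℝ => (α * β) ^ n) (Real.log (α * β)) 0 := by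
    have := (Real.hasStrictDerivAt_const_rpow hαβ 0).hasDerivAt
    simpa [Real.rpow_zero] using this
  have hQ : HasDerivAt (fun n : ℝ => A₀ ^ n) (Real.log A₀) 0 := by
    have := (Real.hasStrictDerivAt_const_rpow hA 0).hasDerivAt
    simpa [Real.rpow_zero] using this
  have hΓα0 : Real.Gamma α ≠ 0 := (Real.Gamma_pos_of_pos hα).ne'
  have hΓβ0 : Real.Gamma β ≠ 0 := (Real.Gamma_pos_of_pos hβ).ne'
  have hξ2 : (0:ℝ) < ξ ^ 2 := by positivity
  have hden0 : (α * β) ^ (0:ℝ) * (Real.Gamma α * Real.Gamma β) ≠ 0 := by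
    rw [Real.rpow_zero]
    simp [hΓα0, hΓβ0]
  have hden20 : (0:ℝ) + ξ ^ 2 ≠ 0 := by positivity
  have hfrac := (hΓα.mul hΓβ).div ((hP.mul_const (Real.Gamma α * Real.Gamma β))) hden0
  have hsec := (hQ.mul_const (ξ ^ 2)).div ((hasDerivAt_id (0:ℝ)).add_const (ξ ^ 2)) hden20
  have htot := hfrac.mul hsec
  have : deriv (compositeMoment α β ξ A₀) 0 = _ := htot.deriv
  rw [this]
  rw [Real.log_div hA.ne' hαβ.ne', digamma_eq hα, digamma_eq hβ]
  simp only [add_zero, zero_add, Real.rpow_zero, one_mul, mul_one, id_eq, Pi.mul_apply, Pi.div_apply]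
  field_simp
  ring

end AuxProofs

/-- For `I = I_a · I_p = X · Y · Z` (independent unit-mean Gammas times pointing error),
`E[I^n]` equals the closed-form moment for `n > -min(α, β, ξ²)`, and differentiating the
moment formula at `n = 0` yields `E[ln I] = ln(A₀/(αβ)) + ψ(α) + ψ(β) - 1/ξ²`. -/
theorem composite_moment_and_mean_log {Ω : Type*} [MeasureSpace Ω]
    [IsProbabilityMeasure (ℙ : Measure Ω)]
    (α β ξ A₀ : ℝ) (hα : 0 < α) (hβ : 0 < β) (hξ : 0 < ξ) (hA : 0 < A₀)
    (X Y Z : Ω → ℝ) (hX : Measurable X) (hY : Measurable Y) (hZ : Measurable Z)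
    (hindep : iIndepFun ![X, Y, Z] ℙ)
    (hlawX : Measure.map X ℙ = gammaMeasure α α)
    (hlawY : Measure.map Y ℙ = gammaMeasure β β)
    (hlawZ : Measure.map Z ℙ =
      volume.withDensity fun t =>
        ENNReal.ofReal ((Ioc (0 : ℝ) A₀).indicator
          (fun t => ξ ^ 2 / A₀ ^ (ξ ^ 2) * t ^ (ξ ^ 2 - 1)) t)) :
    (∀ n : ℝ, -min (min α β) (ξ ^ 2) < n →
        ∫ ω, (X ω * Y ω * Z ω) ^ n = compositeMoment α β ξ A₀ n) ∧
      deriv (compositeMoment α β ξ A₀) 0 =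
        Real.log (A₀ / (α * β)) + digamma α + digamma β - 1 / ξ ^ 2 ∧
      ∫ ω, Real.log (X ω * Y ω * Z ω) =
        Real.log (A₀ / (α * β)) + digamma α + digamma β - 1 / ξ ^ 2 := by
  have hξ2 : (0:ℝ) < ξ ^ 2 := by positivity
  -- a.e. positivity
  have hXpos : ∀ᵐ ω ∂(ℙ : Measure Ω), 0 < X ω := by
    have h1 : ∀ᵐ x ∂(Measure.map X ℙ), 0 < x := hlawX ▸ gamma_ae_pos
    exact (ae_map_iff hX.aemeasurable measurableSet_Ioi).mp h1
  have hYpos : ∀ᵐ ω ∂(ℙ : Measure Ω), 0 < Y ω := by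
    have h1 : ∀ᵐ x ∂(Measure.map Y ℙ), 0 < x := hlawY ▸ gamma_ae_pos
    exact (ae_map_iff hY.aemeasurable measurableSet_Ioi).mp h1
  have hZpos : ∀ᵐ ω ∂(ℙ : Measure Ω), 0 < Z ω := by
    have h1 : ∀ᵐ t ∂(Measure.map Z ℙ), 0 < t := hlawZ ▸ pe_ae_pos hξ2 hA
    exact (ae_map_iff hZ.aemeasurable measurableSet_Ioi).mp h1
  refine ⟨?_, compositeMoment_deriv hα hβ hξ hA, ?_⟩
  · -- moments
    intro n hn
    have hmin1 : min (min α β) (ξ ^ 2) ≤ α := le_trans (min_le_left _ _) (min_le_left _ _)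
    have hmin2 : min (min α β) (ξ ^ 2) ≤ β := le_trans (min_le_left _ _) (min_le_right _ _)
    have hmin3 : min (min α β) (ξ ^ 2) ≤ ξ ^ 2 := min_le_right _ _
    have hnα : -α < n := lt_of_le_of_lt (neg_le_neg hmin1) hn
    have hnβ : -β < n := lt_of_le_of_lt (neg_le_neg hmin2) hn
    have hnξ : -(ξ ^ 2) < n := lt_of_le_of_lt (neg_le_neg hmin3) hn
    have hmeasn : Measurable fun x : ℝ => x ^ n := by measurability
    -- individual moments
    have hMX : ∫ ω, X ω ^ n ∂(ℙ : Measure Ω) = Real.Gamma (α + n) / (α ^ n * Real.Gamma α) := by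
      rw [← integral_map hX.aemeasurable (hmeasn.aestronglyMeasurable), hlawX,
        gamma_rpow_integral hα hα hnα]
    have hMY : ∫ ω, Y ω ^ n ∂(ℙ : Measure Ω) = Real.Gamma (β + n) / (β ^ n * Real.Gamma β) := by
      rw [← integral_map hY.aemeasurable (hmeasn.aestronglyMeasurable), hlawY,
        gamma_rpow_integral hβ hβ hnβ]
    have hMZ : ∫ ω, Z ω ^ n ∂(ℙ : Measure Ω) = A₀ ^ n * ξ ^ 2 / (n + ξ ^ 2) := by
      rw [← integral_map hZ.aemeasurable (hmeasn.aestronglyMeasurable), hlawZ,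
        pe_rpow_integral hξ2 hA hnξ]
    -- independence of powered variables
    have hindepC : iIndepFun
        (fun i => (fun x : ℝ => x ^ n) ∘ (![X, Y, Z] i)) ℙ :=
      hindep.comp _ (fun _ => hmeasn)
    have hiXY : IndepFun (fun ω => X ω ^ n) (fun ω => Y ω ^ n) ℙ :=
      hindepC.indepFun (i := 0) (j := 1) (by decide)
    have hmeas' : ∀ i, Measurable ((fun x : ℝ => x ^ n) ∘ (![X, Y, Z] i)) := by
      intro i
      fin_cases i <;> [exact hmeasn.comp hX; exact hmeasn.comp hY; exact hmeasn.comp hZ]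
    have hiXYZ : IndepFun (fun ω => X ω ^ n * Y ω ^ n) (fun ω => Z ω ^ n) ℙ :=
      hindepC.indepFun_mul_left hmeas' 0 1 2 (by decide) (by decide)
    have hae : (fun ω => (X ω * Y ω * Z ω) ^ n) =ᵐ[(ℙ : Measure Ω)]
        fun ω => X ω ^ n * Y ω ^ n * Z ω ^ n := by
      filter_upwards [hXpos, hYpos, hZpos] with ω h1 h2 h3
      rw [Real.mul_rpow (by positivity) h3.le, Real.mul_rpow h1.le h2.le]
    rw [integral_congr_ae hae]
    have e1 : ∫ ω, X ω ^ n * Y ω ^ n * Z ω ^ n ∂(ℙ : Measure Ω) =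
        (∫ ω, X ω ^ n * Y ω ^ n ∂(ℙ : Measure Ω)) * ∫ ω, Z ω ^ n ∂(ℙ : Measure Ω) :=
      hiXYZ.integral_fun_mul_eq_mul_integral ((hmeasn.comp hX).mul (hmeasn.comp hY)).aestronglyMeasurable
        (hmeasn.comp hZ).aestronglyMeasurable
    have e2 : ∫ ω, X ω ^ n * Y ω ^ n ∂(ℙ : Measure Ω) =
        (∫ ω, X ω ^ n ∂(ℙ : Measure Ω)) * ∫ ω, Y ω ^ n ∂(ℙ : Measure Ω) :=
      hiXY.integral_fun_mul_eq_mul_integral (hmeasn.comp hX).aestronglyMeasurable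
        (hmeasn.comp hY).aestronglyMeasurable
    rw [e1, e2, hMX, hMY, hMZ, compositeMoment, Real.mul_rpow hα.le hβ.le]
    have hd : α ^ n * Real.Gamma α * (β ^ n * Real.Gamma β) =
        α ^ n * β ^ n * (Real.Gamma α * Real.Gamma β) := by ring
    rw [div_mul_div_comm, hd]
  · -- mean log
    have hmeaslog : Measurable Real.log := Real.measurable_log
    have hIX : Integrable (fun ω => Real.log (X ω)) (ℙ : Measure Ω) := by
      have := gamma_log_integrable hα hα
      rw [← hlawX] at this
      exact (integrable_map_measure hmeaslog.aestronglyMeasurable hX.aemeasurable).mp this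
    have hIY : Integrable (fun ω => Real.log (Y ω)) (ℙ : Measure Ω) := by
      have := gamma_log_integrable hβ hβ
      rw [← hlawY] at this
      exact (integrable_map_measure hmeaslog.aestronglyMeasurable hY.aemeasurable).mp this
    have hIZ : Integrable (fun ω => Real.log (Z ω)) (ℙ : Measure Ω) := by
      have := pe_log_integrable hξ2 hA
      rw [← hlawZ] at this
      exact (integrable_map_measure hmeaslog.aestronglyMeasurable hZ.aemeasurable).mp this
    have hae : (fun ω => Real.log (X ω * Y ω * Z ω)) =ᵐ[(ℙ : Measure Ω)]
        fun ω => Real.log (X ω) + Real.log (Y ω) + Real.log (Z ω) := by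
      filter_upwards [hXpos, hYpos, hZpos] with ω h1 h2 h3
      rw [Real.log_mul (by positivity) h3.ne', Real.log_mul h1.ne' h2.ne']
    have hIXY : Integrable (fun ω => Real.log (X ω) + Real.log (Y ω)) (ℙ : Measure Ω) :=
      hIX.add hIY
    rw [integral_congr_ae hae, integral_add hIXY hIZ, integral_add hIX hIY]
    have vX : ∫ ω, Real.log (X ω) ∂(ℙ : Measure Ω) = digamma α - Real.log α := by
      rw [← integral_map hX.aemeasurable hmeaslog.aestronglyMeasurable, hlawX,
        gamma_log_integral hα hα, digamma_eq hα]
    have vY : ∫ ω, Real.log (Y ω) ∂(ℙ : Measure Ω) = digamma β - Real.log β := by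
      rw [← integral_map hY.aemeasurable hmeaslog.aestronglyMeasurable, hlawY,
        gamma_log_integral hβ hβ, digamma_eq hβ]
    have vZ : ∫ ω, Real.log (Z ω) ∂(ℙ : Measure Ω) = Real.log A₀ - 1 / ξ ^ 2 := by
      rw [← integral_map hZ.aemeasurable hmeaslog.aestronglyMeasurable, hlawZ,
        pe_log_integral hξ2 hA]
    rw [vX, vY, vZ, Real.log_div hA.ne' (by positivity), Real.log_mul hα.ne' hβ.ne']
    ring
end
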